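/- Let Λ be a free ℤ-module of finite rank, λ a primitive element of Λ, and μ ∈ Λ with λ, μ linearly independent. Then μ is primitive modulo λ (i.e., [μ] is primitive in Λ/ℤλ) if and only if λ ∧ μ is primitive in Λ ∧ Λ. -/

import Mathlib

/-!
Primitivity pulls back along additive maps, so it suffices to have linear maps in both
directions matching `[μ]` with `λ ∧ μ`. The map `[y] ↦ λ ∧ y` on `Λ ⧸ ℤλ` is well defined since
`λ ∧ λ = 0`. Conversely, primitivity of `λ` means the gcd of its coordinates is `1`, which gives
a functional `f` with `f λ = 1`; contracting with `f` and projecting to degree one sends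
`λ ∧ y` to `y - f y • λ`, that is, to `[y]` modulo `λ`.
-/

/-- An element of a `ℤ`-module is primitive if it is not a non-unit integer
multiple of another element. -/
def IsPrimitiveElt {M : Type*} [AddCommGroup M] [Module ℤ M] (x : M) : Prop :=
  ∀ (n : ℤ) (y : M), x = n • y → IsUnit n

open ExteriorAlgebra

theorem IsPrimitiveElt.of_map {M N F : Type*} [AddCommGroup M] [AddCommGroup N] [FunLike F M N]
    [AddMonoidHomClass F M N] (φ : F) {x : M} (h : IsPrimitiveElt (φ x)) : IsPrimitiveElt x :=
  fun n y hxy => h n (φ y) (by rw [hxy, map_zsmul])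

theorem Module.Basis.exists_eq_smul_of_forall_dvd_repr {ι M : Type*} [AddCommGroup M]
    [Module ℤ M] (b : Module.Basis ι ℤ M) {x : M} {d : ℤ} (h : ∀ i, d ∣ b.repr x i) :
    ∃ y : M, x = d • y := by
  refine ⟨b.repr.symm (Finsupp.mapRange (· / d) (Int.zero_ediv d) (b.repr x)),
    b.repr.injective ?_⟩
  ext i
  simp [Int.mul_ediv_cancel' (h i)]

theorem IsPrimitiveElt.exists_dual_eq_one {M : Type*} [AddCommGroup M] [Module ℤ M]
    [Module.Free ℤ M] {x : M} (hx : IsPrimitiveElt x) : ∃ f : Module.Dual ℤ M, f x = 1 := by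
  let b := Module.Free.chooseBasis ℤ M
  let J : Ideal ℤ := LinearMap.range (Module.Dual.eval ℤ M x)
  obtain ⟨y, hy⟩ := b.exists_eq_smul_of_forall_dvd_repr
    (d := Submodule.IsPrincipal.generator J) fun i =>
      (Submodule.IsPrincipal.mem_iff_generator_dvd J).mp ⟨b.coord i, rfl⟩
  have hJ : J = ⊤ :=
    Ideal.eq_top_of_isUnit_mem J (Submodule.IsPrincipal.generator_mem J) (hx _ y hy)
  exact (hJ ▸ Submodule.mem_top : (1 : ℤ) ∈ J)

namespace ExteriorAlgebra

variable {R M : Type*} [CommRing R] [AddCommGroup M] [Module R M]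

def wedgeLeftQuot (l : M) : (M ⧸ R ∙ l) →ₗ[R] ExteriorAlgebra R M :=
  (R ∙ l).liftQ (LinearMap.mulLeft R (ι R l) ∘ₗ ι R) <|
    (Submodule.span_singleton_le_iff_mem _ _).mpr (by simp)

@[simp]
theorem wedgeLeftQuot_mk (l y : M) :
    wedgeLeftQuot l (Submodule.Quotient.mk y) = ι R l * ι R y :=
  rfl

theorem exists_linearMap_ι_mul_ι_eq_mk {f : Module.Dual R M} {l : M} (hf : f l = 1) :
    ∃ π : ExteriorAlgebra R M →ₗ[R] M ⧸ R ∙ l,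
      ∀ y, π (ι R l * ι R y) = Submodule.Quotient.mk y := by
  refine ⟨(R ∙ l).mkQ ∘ₗ ιInv ∘ₗ CliffordAlgebra.contractLeft f, fun y => ?_⟩
  have hcontract : CliffordAlgebra.contractLeft f (ι R l * ι R y) = ι R y - f y • ι R l := by
    rw [ι, CliffordAlgebra.contractLeft_ι_mul, CliffordAlgebra.contractLeft_ι, hf, one_smul,
      ← Algebra.commutes, ← Algebra.smul_def]
  have hl : (Submodule.Quotient.mk l : M ⧸ R ∙ l) = 0 :=
    (Submodule.Quotient.mk_eq_zero _).mpr (Submodule.mem_span_singleton_self l)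
  simp [hcontract, ι_leftInverse y, ι_leftInverse l, hl]

end ExteriorAlgebra

theorem primitive_mod_iff_wedge_primitive_general
    (Λ : Type*) [AddCommGroup Λ] [Module ℤ Λ] [Module.Free ℤ Λ]
    (l m : Λ) (hl : IsPrimitiveElt l) :
    IsPrimitiveElt (Submodule.Quotient.mk (p := Submodule.span ℤ {l}) m) ↔
    IsPrimitiveElt (ExteriorAlgebra.ι ℤ l * ExteriorAlgebra.ι ℤ m) := by
  obtain ⟨f, hf⟩ := hl.exists_dual_eq_one
  obtain ⟨π, hπ⟩ := exists_linearMap_ι_mul_ι_eq_mk hf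
  exact ⟨fun h => .of_map π (by rwa [hπ]),
    fun h => .of_map (wedgeLeftQuot l) (by rwa [wedgeLeftQuot_mk])⟩

/-- For a free `ℤ`-module `Λ` of finite rank, `λ` primitive and
`λ, μ` linearly independent: `μ` is primitive modulo `λ` iff `λ ∧ μ` is
primitive in `Λ ∧ Λ`. -/
theorem primitive_mod_iff_wedge_primitive
    (Λ : Type*) [AddCommGroup Λ] [Module ℤ Λ] [Module.Free ℤ Λ] [Module.Finite ℤ Λ]
    (l m : Λ) (hl : IsPrimitiveElt l) (hind : LinearIndependent ℤ ![l, m]) :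
    IsPrimitiveElt (Submodule.Quotient.mk (p := Submodule.span ℤ {l}) m) ↔
    IsPrimitiveElt (ExteriorAlgebra.ι ℤ l * ExteriorAlgebra.ι ℤ m) :=
  primitive_mod_iff_wedge_primitive_general Λ l m hl
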